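/- arXiv:2008.03502 — 6 statements merged into one kernel-verified Lean document; each statement's English description precedes it below -/
import Mathlib

section
/- Let T₁ and T₂ be symmetric bilinear forms on V, each admitting ξ as an eigenvector. Then the Hilbert–Schmidt inner products with respect to ḡ and g satisfy ⟨T₁, T₂⟩_ḡ = (1/a²)·⟨T₁, T₂⟩_g − ((a²−1)/a⁴)·T₁(ξ,ξ)·T₂(ξ,ξ). -/
open scoped RealInnerProductSpace BigOperators

/-- The D-homothetically deformed metric `ḡ := a·g + a(a−1)·η⊗η`, where
`g` is the inner product of `V` and `η := g(ξ, ·)`. -/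
noncomputable def gbar {V : Type*} [NormedAddCommGroup V] [InnerProductSpace ℝ V]
    (ξ : V) (a : ℝ) (x y : V) : ℝ :=
  a * ⟪x, y⟫ + a * (a - 1) * (⟪ξ, x⟫ * ⟪ξ, y⟫)

open Matrix

lemma sum_mul_eq_trace {ι : Type*} [Fintype ι] (A B : Matrix ι ι ℝ) :
    ∑ i, ∑ j, A i j * B i j = (A * Bᵀ).trace := by
  simp [Matrix.trace, Matrix.mul_apply, Matrix.diag, Matrix.transpose_apply]


/-- For symmetric bilinear forms `T₁`, `T₂` admitting `ξ` as an eigenvector, the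
Hilbert–Schmidt inner products w.r.t. `ḡ` (computed in any `ḡ`-orthonormal basis `f`)
and w.r.t. `g` (computed in any `g`-orthonormal basis `e`) satisfy
`⟨T₁,T₂⟩_ḡ = (1/a²)⟨T₁,T₂⟩_g − ((a²−1)/a⁴)·T₁(ξ,ξ)·T₂(ξ,ξ)`. -/
theorem hilbertSchmidt_inner_deformed
    (n : ℕ) (hn : 1 ≤ n) {V : Type*} [NormedAddCommGroup V] [InnerProductSpace ℝ V]
    [FiniteDimensional ℝ V] (hdim : Module.finrank ℝ V = 2 * n + 1)
    (ξ : V) (hξ : ‖ξ‖ = 1) (a : ℝ) (ha : 0 < a)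
    (T₁ T₂ : V →ₗ[ℝ] V →ₗ[ℝ] ℝ)
    (hT₁symm : ∀ x y, T₁ x y = T₁ y x) (hT₂symm : ∀ x y, T₂ x y = T₂ y x)
    (hT₁ξ : ∀ x, T₁ x ξ = T₁ ξ ξ * ⟪x, ξ⟫) (hT₂ξ : ∀ x, T₂ x ξ = T₂ ξ ξ * ⟪x, ξ⟫)
    (f : Module.Basis (Fin (2 * n + 1)) ℝ V)
    (hf : ∀ i j, gbar ξ a (f i) (f j) = if i = j then 1 else 0)
    (e : Module.Basis (Fin (2 * n + 1)) ℝ V) (he : Orthonormal ℝ ⇑e) :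
    ∑ i, ∑ j, T₁ (f i) (f j) * T₂ (f i) (f j) =
      (1 / a ^ 2) * (∑ i, ∑ j, T₁ (e i) (e j) * T₂ (e i) (e j)) -
        ((a ^ 2 - 1) / a ^ 4) * (T₁ ξ ξ * T₂ ξ ξ) := by
  classical
  have ha0 : a ≠ 0 := ne_of_gt ha
  have hee : ∀ k l, ⟪e k, e l⟫ = if k = l then (1:ℝ) else 0 := orthonormal_iff_ite.mp he
  set c : Fin (2 * n + 1) → Fin (2 * n + 1) → ℝ := fun i k => e.repr (f i) k with hc
  have hfe : ∀ i, f i = ∑ k, c i k • e k := fun i => (e.sum_repr (f i)).symm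
  set v : Fin (2 * n + 1) → ℝ := fun k => ⟪e k, ξ⟫ with hv
  have hrepr : ∀ x : V, ∀ k, ⟪e k, x⟫ = e.repr x k := by
    intro x k
    conv_lhs => rw [← e.sum_repr x]
    simp only [inner_sum, real_inner_smul_right, hee, mul_ite, mul_one, mul_zero,
      Finset.sum_ite_eq, Finset.mem_univ, if_true]
  have hξe : ξ = ∑ k, v k • e k := by
    conv_lhs => rw [← e.sum_repr ξ]
    exact Finset.sum_congr rfl fun k _ => by rw [hv]; rw [← hrepr]
  have hvv : ∑ k, v k * v k = 1 := by
    have h1 : ⟪ξ, ξ⟫ = (1:ℝ) := by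
      rw [real_inner_self_eq_norm_sq, hξ]; norm_num
    calc ∑ k, v k * v k = ⟪ξ, ξ⟫ := by
          conv_rhs => rw [hξe]
          simp only [inner_sum, sum_inner, real_inner_smul_right, real_inner_smul_left, hee,
            mul_ite, mul_one, mul_zero, Finset.sum_ite_eq, Finset.sum_ite_eq', Finset.mem_univ,
            if_true]
      _ = 1 := h1
  set C : Matrix (Fin (2 * n + 1)) (Fin (2 * n + 1)) ℝ := Matrix.of c with hC
  set M₁ : Matrix (Fin (2 * n + 1)) (Fin (2 * n + 1)) ℝ :=
    Matrix.of (fun k l => T₁ (e k) (e l)) with hM₁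
  set M₂ : Matrix (Fin (2 * n + 1)) (Fin (2 * n + 1)) ℝ :=
    Matrix.of (fun k l => T₂ (e k) (e l)) with hM₂
  set P : Matrix (Fin (2 * n + 1)) (Fin (2 * n + 1)) ℝ :=
    Matrix.of (fun k l => v k * v l) with hP
  set G : Matrix (Fin (2 * n + 1)) (Fin (2 * n + 1)) ℝ := a • 1 + (a * (a - 1)) • P with hG
  set b : ℝ := (a - 1) / a ^ 2 with hb
  set H : Matrix (Fin (2 * n + 1)) (Fin (2 * n + 1)) ℝ := (1 / a) • 1 - b • P with hH
  set l₁ : ℝ := T₁ ξ ξ with hl₁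
  set l₂ : ℝ := T₂ ξ ξ with hl₂
  -- P is idempotent with trace 1
  have hP2 : P * P = P := by
    ext k m
    simp only [Matrix.mul_apply, hP, Matrix.of_apply]
    calc ∑ l, v k * v l * (v l * v m) = (v k * v m) * ∑ l, v l * v l := by
          rw [Finset.mul_sum]; exact Finset.sum_congr rfl fun l _ => by ring
      _ = v k * v m := by rw [hvv, mul_one]
  have htrP : P.trace = 1 := by
    simpa [Matrix.trace, Matrix.diag, hP] using hvv
  -- eigenvector conditions, in matrix form
  have hM₁v : ∀ k, ∑ l, T₁ (e k) (e l) * v l = l₁ * v k := by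
    intro k
    have h : T₁ (e k) ξ = ∑ l, T₁ (e k) (e l) * v l := by
      conv_lhs => rw [hξe]
      simp [map_sum, mul_comm]
    rw [← h, hT₁ξ, hl₁, hv]
  have hM₂v : ∀ k, ∑ l, T₂ (e k) (e l) * v l = l₂ * v k := by
    intro k
    have h : T₂ (e k) ξ = ∑ l, T₂ (e k) (e l) * v l := by
      conv_lhs => rw [hξe]
      simp [map_sum, mul_comm]
    rw [← h, hT₂ξ, hl₂, hv]
  have hM₁P : M₁ * P = l₁ • P := by
    ext k m
    simp only [Matrix.mul_apply, hM₁, hP, Matrix.of_apply, Matrix.smul_apply, smul_eq_mul]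
    calc ∑ l, T₁ (e k) (e l) * (v l * v m)
        = (∑ l, T₁ (e k) (e l) * v l) * v m := by
          rw [Finset.sum_mul]; exact Finset.sum_congr rfl fun l _ => by ring
      _ = l₁ * (v k * v m) := by rw [hM₁v]; ring
  have hM₂P : M₂ * P = l₂ • P := by
    ext k m
    simp only [Matrix.mul_apply, hM₂, hP, Matrix.of_apply, Matrix.smul_apply, smul_eq_mul]
    calc ∑ l, T₂ (e k) (e l) * (v l * v m)
        = (∑ l, T₂ (e k) (e l) * v l) * v m := by
          rw [Finset.sum_mul]; exact Finset.sum_congr rfl fun l _ => by ring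
      _ = l₂ * (v k * v m) := by rw [hM₂v]; ring
  have hPM₂ : P * M₂ = l₂ • P := by
    ext k m
    simp only [Matrix.mul_apply, hM₂, hP, Matrix.of_apply, Matrix.smul_apply, smul_eq_mul]
    calc ∑ l, v k * v l * T₂ (e l) (e m)
        = v k * ∑ l, T₂ (e m) (e l) * v l := by
          rw [Finset.mul_sum]
          exact Finset.sum_congr rfl fun l _ => by rw [hT₂symm (e l) (e m)]; ring
      _ = l₂ * (v k * v m) := by rw [hM₂v]; ring
  -- G H = 1 = H G
  have hPH : P * H = (1 / a - b) • P := by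
    rw [hH, Matrix.mul_sub, Matrix.mul_smul, Matrix.mul_smul, Matrix.mul_one, hP2, sub_smul]
  have hGH : G * H = 1 := by
    have h0 : G * H = a • H + (a * (a - 1)) • (P * H) := by
      rw [hG, Matrix.add_mul, Matrix.smul_mul, Matrix.smul_mul, Matrix.one_mul]
    rw [h0, hPH, hH, smul_sub, smul_smul, smul_smul, smul_smul]
    have c1 : a * (1 / a) = 1 := by field_simp
    have c2 : a * (a - 1) * (1 / a - b) = a * b := by rw [hb]; field_simp; ring
    rw [c1, c2, one_smul]
    abel
  have hHG : H * G = 1 := mul_eq_one_comm.mp hGH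
  -- the change-of-basis relation C G Cᵀ = 1
  have hip : ∀ i j, ⟪f i, f j⟫ = ∑ k, c i k * c j k := by
    intro i j
    rw [hfe i, hfe j]
    simp only [inner_sum, sum_inner, real_inner_smul_right, real_inner_smul_left, hee,
      mul_ite, mul_one, mul_zero, Finset.sum_ite_eq, Finset.mem_univ, if_true]
    exact Finset.sum_congr rfl fun k _ => by simp [Finset.sum_ite_eq']; ring
  have hiξ : ∀ i, ⟪ξ, f i⟫ = ∑ k, c i k * v k := by
    intro i
    rw [hfe i]
    simp only [inner_sum, real_inner_smul_right]
    exact Finset.sum_congr rfl fun k _ => by rw [hv]; rw [real_inner_comm]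
  have hCP : ∀ i l, (C * P) i l = (∑ k, c i k * v k) * v l := by
    intro i l
    simp only [Matrix.mul_apply, hC, hP, Matrix.of_apply, Finset.sum_mul]
    exact Finset.sum_congr rfl fun k _ => by ring
  have hCGCt : C * G * Cᵀ = 1 := by
    ext i j
    have hfij := hf i j
    rw [gbar, hip, hiξ, hiξ] at hfij
    have hCCt : (C * Cᵀ) i j = ∑ k, c i k * c j k := by
      simp only [Matrix.mul_apply, hC, Matrix.of_apply, Matrix.transpose_apply]
    have hCPC : ((C * P) * Cᵀ) i j = (∑ k, c i k * v k) * (∑ k, c j k * v k) := by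
      rw [Matrix.mul_apply]
      calc (∑ l, (C * P) i l * Cᵀ l j)
          = ∑ l, ((∑ k, c i k * v k) * v l) * c j l := by
            refine Finset.sum_congr rfl fun l _ => ?_
            rw [hCP]; rfl
        _ = (∑ k, c i k * v k) * ∑ l, c j l * v l := by
            rw [Finset.mul_sum]
            exact Finset.sum_congr rfl fun l _ => by ring
    have lhs1 : (C * G * Cᵀ) i j =
        a * (∑ k, c i k * c j k) + a * (a - 1) * ((∑ k, c i k * v k) * (∑ k, c j k * v k)) := by
      have hCG : C * G = a • C + (a * (a - 1)) • (C * P) := by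
        rw [hG, Matrix.mul_add, Matrix.mul_smul, Matrix.mul_smul, Matrix.mul_one]
      rw [hCG, Matrix.add_mul, Matrix.smul_mul, Matrix.smul_mul]
      simp only [Matrix.add_apply, Matrix.smul_apply, smul_eq_mul]
      rw [hCCt, hCPC]
    rw [lhs1, hfij, Matrix.one_apply]
  -- hence Cᵀ C = H
  have hCtC : Cᵀ * C = H := by
    have h1 : C * (G * Cᵀ) = 1 := by rw [← Matrix.mul_assoc]; exact hCGCt
    have h2 : (G * Cᵀ) * C = 1 := mul_eq_one_comm.mp h1
    have h3 : G * (Cᵀ * C) = 1 := by rw [← Matrix.mul_assoc]; exact h2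
    calc Cᵀ * C = (H * G) * (Cᵀ * C) := by rw [hHG, Matrix.one_mul]
      _ = H * (G * (Cᵀ * C)) := by rw [Matrix.mul_assoc]
      _ = H := by rw [h3, Matrix.mul_one]
  -- express T in the f basis via matrices
  have hTf₁ : ∀ i j, T₁ (f i) (f j) = (C * M₁ * Cᵀ) i j := by
    intro i j
    rw [hfe i, hfe j]
    simp only [map_sum, LinearMap.sum_apply, _root_.map_smul, LinearMap.smul_apply, smul_eq_mul]
    simp only [Matrix.mul_apply, Matrix.transpose_apply, hC, hM₁, Matrix.of_apply,
      Finset.sum_mul]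
    refine Finset.sum_congr rfl fun x _ => ?_
    rw [Finset.mul_sum]
    exact Finset.sum_congr rfl fun y _ => by ring
  have hTf₂ : ∀ i j, T₂ (f i) (f j) = (C * M₂ * Cᵀ) i j := by
    intro i j
    rw [hfe i, hfe j]
    simp only [map_sum, LinearMap.sum_apply, _root_.map_smul, LinearMap.smul_apply, smul_eq_mul]
    simp only [Matrix.mul_apply, Matrix.transpose_apply, hC, hM₂, Matrix.of_apply,
      Finset.sum_mul]
    refine Finset.sum_congr rfl fun x _ => ?_
    rw [Finset.mul_sum]
    exact Finset.sum_congr rfl fun y _ => by ring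
  have hM₁symm : M₁ᵀ = M₁ := by
    ext k l; simp only [Matrix.transpose_apply, hM₁, Matrix.of_apply]; exact hT₁symm _ _
  have hM₂symm : M₂ᵀ = M₂ := by
    ext k l; simp only [Matrix.transpose_apply, hM₂, Matrix.of_apply]; exact hT₂symm _ _
  -- LHS as a trace
  have hLHS : ∑ i, ∑ j, T₁ (f i) (f j) * T₂ (f i) (f j)
      = (M₁ * H * (M₂ * H)).trace := by
    have e1 : ∑ i, ∑ j, T₁ (f i) (f j) * T₂ (f i) (f j)
        = ((C * M₁ * Cᵀ) * (C * M₂ * Cᵀ)ᵀ).trace := by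
      rw [← sum_mul_eq_trace]
      exact Finset.sum_congr rfl fun i _ => Finset.sum_congr rfl fun j _ => by
        rw [hTf₁, hTf₂]
    have e2 : (C * M₂ * Cᵀ)ᵀ = C * M₂ * Cᵀ := by
      rw [Matrix.transpose_mul, Matrix.transpose_mul, Matrix.transpose_transpose, hM₂symm,
        Matrix.mul_assoc]
    rw [e1, e2]
    have e3 : (C * M₁ * Cᵀ) * (C * M₂ * Cᵀ) = C * (M₁ * Cᵀ * (C * M₂ * Cᵀ)) := by
      simp only [Matrix.mul_assoc]
    rw [e3, Matrix.trace_mul_comm]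
    have e4 : M₁ * Cᵀ * (C * M₂ * Cᵀ) * C = M₁ * (Cᵀ * C) * (M₂ * (Cᵀ * C)) := by
      simp only [Matrix.mul_assoc]
    rw [e4, hCtC]
  -- compute the trace
  have hM₁H : M₁ * H = (1 / a) • M₁ - (b * l₁) • P := by
    rw [hH, Matrix.mul_sub, Matrix.mul_smul, Matrix.mul_smul, Matrix.mul_one, hM₁P, smul_smul,
      mul_comm b l₁]
  have hM₂H : M₂ * H = (1 / a) • M₂ - (b * l₂) • P := by
    rw [hH, Matrix.mul_sub, Matrix.mul_smul, Matrix.mul_smul, Matrix.mul_one, hM₂P, smul_smul,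
      mul_comm b l₂]
  have hprod : M₁ * H * (M₂ * H)
      = (1 / a * (1 / a)) • (M₁ * M₂) - (1 / a * (b * l₂) * l₁) • P
        - (b * l₁ * (1 / a) * l₂) • P + (b * l₁ * (b * l₂)) • P := by
    rw [hM₁H, hM₂H]
    simp only [Matrix.sub_mul, Matrix.mul_sub, Matrix.smul_mul, Matrix.mul_smul,
      hM₁P, hPM₂, hP2, smul_smul]
    module
  have hRHS : ∑ i, ∑ j, T₁ (e i) (e j) * T₂ (e i) (e j) = (M₁ * M₂).trace := by
    rw [show (∑ i, ∑ j, T₁ (e i) (e j) * T₂ (e i) (e j)) = ∑ i, ∑ j, M₁ i j * M₂ i j from rfl,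
      sum_mul_eq_trace, hM₂symm]
  rw [hLHS, hRHS, hprod]
  simp only [Matrix.trace_add, Matrix.trace_sub, Matrix.trace_smul, htrP, smul_eq_mul, mul_one]
  rw [hb]
  field_simp
  ring
end

section
/- Let T be a symmetric bilinear form on V admitting ξ as an eigenvector. Then the Hilbert–Schmidt norms of T with respect to ḡ and g satisfy |T|²_ḡ = (1/a²)·|T|²_g − ((a²−1)/a⁴)·(T(ξ,ξ))². -/
open scoped RealInnerProductSpace BigOperators

/-- For a symmetric bilinear form `T` admitting `ξ` as an eigenvector, the
Hilbert–Schmidt norms w.r.t. `ḡ` (computed in any `ḡ`-orthonormal basis `f`) and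
w.r.t. `g` (computed in any `g`-orthonormal basis `e`) satisfy
`|T|²_ḡ = (1/a²)|T|²_g − ((a²−1)/a⁴)·(T(ξ,ξ))²`. -/
theorem hilbertSchmidt_norm_deformed
    (n : ℕ) (hn : 1 ≤ n) {V : Type*} [NormedAddCommGroup V] [InnerProductSpace ℝ V]
    [FiniteDimensional ℝ V] (hdim : Module.finrank ℝ V = 2 * n + 1)
    (ξ : V) (hξ : ‖ξ‖ = 1) (a : ℝ) (ha : 0 < a)
    (T : V →ₗ[ℝ] V →ₗ[ℝ] ℝ)
    (hTsymm : ∀ x y, T x y = T y x)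
    (hTξ : ∀ x, T x ξ = T ξ ξ * ⟪x, ξ⟫)
    (f : Module.Basis (Fin (2 * n + 1)) ℝ V)
    (hf : ∀ i j, gbar ξ a (f i) (f j) = if i = j then 1 else 0)
    (e : Module.Basis (Fin (2 * n + 1)) ℝ V) (he : Orthonormal ℝ ⇑e) :
    ∑ i, ∑ j, (T (f i) (f j)) ^ 2 =
      (1 / a ^ 2) * (∑ i, ∑ j, (T (e i) (e j)) ^ 2) -
        ((a ^ 2 - 1) / a ^ 4) * (T ξ ξ) ^ 2 := by
  have ha0 : a ≠ 0 := ne_of_gt ha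
  have hξξ : ⟪ξ, ξ⟫ = 1 := by
    rw [real_inner_self_eq_norm_sq, hξ]; norm_num
  -- gbar is symmetric
  have hsymm : ∀ x y : V, gbar ξ a x y = gbar ξ a y x := by
    intro x y; simp only [gbar]; rw [real_inner_comm x y]; ring
  -- gbar linear in first argument
  have hsmul : ∀ (c : ℝ) (x y : V), gbar ξ a (c • x) y = c * gbar ξ a x y := by
    intro c x y; simp only [gbar, real_inner_smul_left, inner_smul_right]; ring
  have hsub : ∀ x y z : V, gbar ξ a (x - y) z = gbar ξ a x z - gbar ξ a y z := by
    intro x y z; simp only [gbar, inner_sub_left, inner_sub_right]; ring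
  have hsum : ∀ (c : Fin (2*n+1) → ℝ) (y : V),
      gbar ξ a (∑ i, c i • f i) y = ∑ i, c i * gbar ξ a (f i) y := by
    intro c y
    simp only [gbar, sum_inner, inner_sum, real_inner_smul_left, inner_smul_right,
      Finset.mul_sum, Finset.sum_mul]
    rw [← Finset.sum_add_distrib]
    exact Finset.sum_congr rfl fun i _ => by ring
  -- coordinates in f
  have hrepr : ∀ (x : V) (i : Fin (2*n+1)), gbar ξ a x (f i) = f.repr x i := by
    intro x i
    conv_lhs => rw [← f.sum_repr x]
    rw [hsum]
    simp [hf]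
  -- Parseval for f
  have hParf : ∀ x y : V, (∑ i, gbar ξ a x (f i) * gbar ξ a y (f i)) = gbar ξ a x y := by
    intro x y
    conv_rhs => rw [← f.sum_repr x, hsum]
    refine Finset.sum_congr rfl fun i _ => ?_
    rw [hrepr, hsymm (f i) y, hrepr]
  -- g in terms of gbar
  have hginv : ∀ x y : V, ⟪x, y⟫ =
      gbar ξ a ((1/a) • x - ((a-1)/a^4 * gbar ξ a ξ x) • ξ) y := by
    intro x y
    rw [hsub, hsmul, hsmul]
    simp only [gbar, hξξ]
    field_simp
    ring
  -- key: inverse-metric identity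
  have hP : ∀ x y : V, (∑ i, ⟪x, f i⟫ * ⟪y, f i⟫) =
      (1/a) * ⟪x, y⟫ + ((1-a)/a^2) * (⟪ξ, x⟫ * ⟪ξ, y⟫) := by
    intro x y
    have h0 : (∑ i, ⟪x, f i⟫ * ⟪y, f i⟫) =
        gbar ξ a ((1/a) • x - ((a-1)/a^4 * gbar ξ a ξ x) • ξ)
          ((1/a) • y - ((a-1)/a^4 * gbar ξ a ξ y) • ξ) := by
      rw [← hParf]
      exact Finset.sum_congr rfl fun i _ => by rw [hginv x (f i), hginv y (f i)]
    rw [h0]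
    simp only [gbar, inner_sub_left, inner_sub_right, real_inner_smul_left,
      real_inner_smul_right, hξξ, real_inner_comm x ξ, real_inner_comm y ξ]
    field_simp
    ring
  -- orthonormal basis version of e
  let b : OrthonormalBasis (Fin (2*n+1)) ℝ V := e.toOrthonormalBasis he
  have hbe : ∀ i, b i = e i := fun i => by simp [b]
  have hPare : ∀ x y : V, (∑ k, ⟪x, e k⟫ * ⟪y, e k⟫) = ⟪x, y⟫ := by
    intro x y
    have h1 := b.sum_inner_mul_inner x y
    simp only [hbe] at h1
    rw [← h1]
    exact Finset.sum_congr rfl fun k _ => by rw [real_inner_comm y (e k)]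
  -- Riesz vectors
  set R : V → V := fun x => ∑ k, T x (e k) • e k with hRdef
  have hR : ∀ x y : V, ⟪R x, y⟫ = T x y := by
    intro x y
    have hexp : T x y = ∑ k, ⟪e k, y⟫ * T x (e k) := by
      conv_lhs => rw [← b.sum_repr' y]
      rw [map_sum]
      refine Finset.sum_congr rfl fun k _ => ?_
      rw [map_smul, hbe]; simp [mul_comm]
    rw [hexp, hRdef]
    simp only [sum_inner, real_inner_smul_left]
    exact Finset.sum_congr rfl fun k _ => by ring
  have hRe : ∀ (x : V) (k : Fin (2*n+1)), ⟪R x, e k⟫ = T x (e k) := fun x k => hR x (e k)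
  -- the star identity
  have hstar : ∀ x y : V, (∑ j, T x (f j) * T y (f j)) =
      (1/a) * (∑ k, T x (e k) * T y (e k)) + ((1-a)/a^2) * (T x ξ * T y ξ) := by
    intro x y
    have h1 : (∑ j, T x (f j) * T y (f j)) = ∑ j, ⟪R x, f j⟫ * ⟪R y, f j⟫ :=
      Finset.sum_congr rfl fun j _ => by rw [hR, hR]
    have h2 : ⟪R x, R y⟫ = ∑ k, T x (e k) * T y (e k) := by
      rw [← hPare (R x) (R y)]
      exact Finset.sum_congr rfl fun k _ => by rw [hRe, hRe]
    rw [h1, hP, h2, real_inner_comm (R x) ξ, real_inner_comm (R y) ξ, hR x ξ, hR y ξ]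
  -- assemble
  simp only [pow_two]
  have hL : ∑ i, ∑ j, T (f i) (f j) * T (f i) (f j) =
      (1/a) * (∑ i, ∑ k, T (f i) (e k) * T (f i) (e k)) +
        ((1-a)/a^2) * ∑ i, T (f i) ξ * T (f i) ξ := by
    rw [Finset.mul_sum, Finset.mul_sum, ← Finset.sum_add_distrib]
    exact Finset.sum_congr rfl fun i _ => hstar (f i) (f i)
  have hmid : (∑ i, ∑ k, T (f i) (e k) * T (f i) (e k)) =
      (1/a) * (∑ k, ∑ l, T (e k) (e l) * T (e k) (e l)) +
        ((1-a)/a^2) * ∑ k, T (e k) ξ * T (e k) ξ := by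
    rw [Finset.sum_comm, Finset.mul_sum, Finset.mul_sum, ← Finset.sum_add_distrib]
    refine Finset.sum_congr rfl fun k _ => ?_
    have h2 : (∑ i, T (f i) (e k) * T (f i) (e k)) = ∑ i, T (e k) (f i) * T (e k) (f i) :=
      Finset.sum_congr rfl fun i _ => by rw [hTsymm (f i) (e k)]
    rw [h2, hstar (e k) (e k)]
  have hTe : ∑ k, T (e k) ξ * T (e k) ξ = T ξ ξ * T ξ ξ := by
    have h3 : ∀ k, T (e k) ξ * T (e k) ξ = (T ξ ξ * T ξ ξ) * (⟪ξ, e k⟫ * ⟪ξ, e k⟫) := by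
      intro k; rw [hTξ (e k), real_inner_comm ξ (e k)]; ring
    simp only [h3]
    rw [← Finset.mul_sum, hPare ξ ξ, hξξ, mul_one]
  have hTf : ∑ i, T (f i) ξ * T (f i) ξ = (T ξ ξ * T ξ ξ) / a^2 := by
    have h3 : ∀ i, T (f i) ξ * T (f i) ξ = (T ξ ξ * T ξ ξ) * (⟪ξ, f i⟫ * ⟪ξ, f i⟫) := by
      intro i; rw [hTξ (f i), real_inner_comm ξ (f i)]; ring
    simp only [h3]
    rw [← Finset.mul_sum, hP ξ ξ, hξξ]
    field_simp
    ring
  rw [hL, hmid, hTe, hTf]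
  field_simp
  ring
end

section
/- Let T be a symmetric bilinear form on V satisfying T(x, ξ) = −2n·η(x) for all x ∈ V (the pointwise property of the Ricci tensor of a Kenmotsu manifold). Then: ⟨g, T⟩_ḡ = (1/a²)·tr_g T + 2n(a²−1)/a⁴, ⟨T, η⊗η⟩_ḡ = −2n/a⁴, and |T|²_ḡ = (1/a²)·|T|²_g − 4n²(a²−1)/a⁴. -/
open scoped RealInnerProductSpace BigOperators

section Aux

variable {V : Type*} [NormedAddCommGroup V] [InnerProductSpace ℝ V]
variable {ι : Type*} [Fintype ι] [DecidableEq ι]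

lemma gbar_sum_left (ξ : V) (a : ℝ) (s : Finset ι) (c : ι → ℝ) (v : ι → V) (y : V) :
    gbar ξ a (∑ j ∈ s, c j • v j) y = ∑ j ∈ s, c j * gbar ξ a (v j) y := by
  simp only [gbar, sum_inner, inner_sum, real_inner_smul_left, real_inner_smul_right,
    Finset.mul_sum, Finset.sum_mul]
  rw [← Finset.sum_add_distrib]
  exact Finset.sum_congr rfl fun j _ => by ring

lemma repr_eq (ξ : V) (a : ℝ) (f : Module.Basis ι ℝ V)
    (hf : ∀ i j, gbar ξ a (f i) (f j) = if i = j then 1 else 0) (x : V) (i : ι) :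
    f.repr x i = gbar ξ a x (f i) := by
  conv_rhs => rw [← f.sum_repr x]
  rw [gbar_sum_left]
  simp [hf]

lemma expand_fbar (ξ : V) (a : ℝ) (f : Module.Basis ι ℝ V)
    (hf : ∀ i j, gbar ξ a (f i) (f j) = if i = j then 1 else 0)
    (L : V →ₗ[ℝ] ℝ) (x : V) :
    ∑ i, gbar ξ a x (f i) * L (f i) = L x := by
  conv_rhs => rw [← f.sum_repr x, map_sum]
  simp only [map_smul, smul_eq_mul]
  exact Finset.sum_congr rfl fun i _ => by rw [repr_eq ξ a f hf]

lemma xi_sum (ξ : V) (hξ : ‖ξ‖ = 1) {a : ℝ} (ha : a ≠ 0) (f : Module.Basis ι ℝ V)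
    (hf : ∀ i j, gbar ξ a (f i) (f j) = if i = j then 1 else 0)
    (L : V →ₗ[ℝ] ℝ) :
    ∑ i, ⟪ξ, f i⟫ * L (f i) = L ξ / a ^ 2 := by
  have key : ∀ y : V, gbar ξ a ξ y = a ^ 2 * ⟪ξ, y⟫ := by
    intro y
    simp only [gbar, real_inner_self_eq_norm_sq, hξ]
    ring
  have h2 : ∑ i, a ^ 2 * (⟪ξ, f i⟫ * L (f i)) = L ξ := by
    rw [← expand_fbar ξ a f hf L ξ]
    exact Finset.sum_congr rfl fun i _ => by rw [key]; ring
  rw [← Finset.mul_sum] at h2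
  rw [eq_div_iff (pow_ne_zero 2 ha)]
  rw [← h2]; ring

lemma expand_g (ξ : V) (hξ : ‖ξ‖ = 1) {a : ℝ} (ha : a ≠ 0) (f : Module.Basis ι ℝ V)
    (hf : ∀ i j, gbar ξ a (f i) (f j) = if i = j then 1 else 0)
    (L : V →ₗ[ℝ] ℝ) (x : V) :
    ∑ i, ⟪x, f i⟫ * L (f i) = (1 / a) * L x - ((a - 1) / a ^ 2) * (⟪ξ, x⟫ * L ξ) := by
  have hg : ∀ y : V, (⟪x, y⟫ : ℝ) =
      (1 / a) * gbar ξ a x y - (a - 1) * (⟪ξ, x⟫ * ⟪ξ, y⟫) := by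
    intro y
    have h0 : a * ((1 / a) * gbar ξ a x y) =
        a * (⟪x, y⟫ + (a - 1) * (⟪ξ, x⟫ * ⟪ξ, y⟫)) := by
      rw [← mul_assoc, mul_one_div, div_self ha, one_mul]
      simp only [gbar]; ring
    have h1 := mul_left_cancel₀ ha h0
    linarith [h1]
  have : ∑ i, ⟪x, f i⟫ * L (f i) =
      ∑ i, ((1 / a) * (gbar ξ a x (f i) * L (f i)) -
        ((a - 1) * ⟪ξ, x⟫) * (⟪ξ, f i⟫ * L (f i))) :=
    Finset.sum_congr rfl fun i _ => by rw [hg]; ring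
  rw [this, Finset.sum_sub_distrib, ← Finset.mul_sum, ← Finset.mul_sum,
    expand_fbar ξ a f hf L x, xi_sum ξ hξ ha f hf L]
  ring

lemma expand_e (e : Module.Basis ι ℝ V) (he : Orthonormal ℝ ⇑e) (L : V →ₗ[ℝ] ℝ) (y : V) :
    ∑ k, ⟪e k, y⟫ * L (e k) = L y := by
  have hr : ∀ k, (⟪e k, y⟫ : ℝ) = e.repr y k := by
    intro k
    conv_lhs => rw [← e.sum_repr y]
    rw [inner_sum]
    simp [real_inner_smul_right, orthonormal_iff_ite.mp he]
  conv_rhs => rw [← e.sum_repr y, map_sum]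
  simp only [map_smul, smul_eq_mul]
  exact Finset.sum_congr rfl fun k _ => by rw [hr]

lemma pair_sum (ξ : V) (hξ : ‖ξ‖ = 1) {a : ℝ} (ha : a ≠ 0) (f : Module.Basis ι ℝ V)
    (hf : ∀ i j, gbar ξ a (f i) (f j) = if i = j then 1 else 0)
    (e : Module.Basis ι ℝ V) (he : Orthonormal ℝ ⇑e) (φ ψ : V →ₗ[ℝ] ℝ) :
    ∑ i, φ (f i) * ψ (f i) =
      (1 / a) * (∑ k, φ (e k) * ψ (e k)) - ((a - 1) / a ^ 2) * (φ ξ * ψ ξ) := by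
  set p := ∑ k, φ (e k) • e k with hpdef
  have hp : ∀ v : V, (⟪p, v⟫ : ℝ) = φ v := by
    intro v
    rw [hpdef, sum_inner]
    simp only [real_inner_smul_left]
    rw [← expand_e e he φ v]
    exact Finset.sum_congr rfl fun k _ => by ring
  have hψp : ψ p = ∑ k, φ (e k) * ψ (e k) := by
    rw [hpdef, map_sum]
    simp [smul_eq_mul]
  have h := expand_g ξ hξ ha f hf ψ p
  rw [real_inner_comm p ξ, hp ξ, hψp] at h
  rw [← h]
  exact Finset.sum_congr rfl fun i _ => by rw [hp]

lemma double_sum (ξ : V) (hξ : ‖ξ‖ = 1) {a : ℝ} (ha : a ≠ 0) (f : Module.Basis ι ℝ V)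
    (hf : ∀ i j, gbar ξ a (f i) (f j) = if i = j then 1 else 0)
    (e : Module.Basis ι ℝ V) (he : Orthonormal ℝ ⇑e) (S U : V →ₗ[ℝ] V →ₗ[ℝ] ℝ) :
    ∑ i, ∑ j, S (f i) (f j) * U (f i) (f j) =
      (1 / a ^ 2) * (∑ k, ∑ l, S (e l) (e k) * U (e l) (e k))
      - ((a - 1) / a ^ 3) * (∑ k, S ξ (e k) * U ξ (e k))
      - ((a - 1) / a ^ 3) * (∑ l, S (e l) ξ * U (e l) ξ)
      + ((a - 1) ^ 2 / a ^ 4) * (S ξ ξ * U ξ ξ) := by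
  have step1 : ∀ i, ∑ j, S (f i) (f j) * U (f i) (f j) =
      (1 / a) * (∑ k, S (f i) (e k) * U (f i) (e k))
        - ((a - 1) / a ^ 2) * (S (f i) ξ * U (f i) ξ) :=
    fun i => pair_sum ξ hξ ha f hf e he (S (f i)) (U (f i))
  have hA : ∑ i, ∑ k, S (f i) (e k) * U (f i) (e k)
      = ∑ k, ∑ i, S (f i) (e k) * U (f i) (e k) := Finset.sum_comm
  have step2 : ∀ k, ∑ i, S (f i) (e k) * U (f i) (e k) =
      (1 / a) * (∑ l, S (e l) (e k) * U (e l) (e k))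
        - ((a - 1) / a ^ 2) * (S ξ (e k) * U ξ (e k)) := by
    intro k
    have := pair_sum ξ hξ ha f hf e he (S.flip (e k)) (U.flip (e k))
    simpa using this
  have step3 : ∑ i, S (f i) ξ * U (f i) ξ =
      (1 / a) * (∑ l, S (e l) ξ * U (e l) ξ)
        - ((a - 1) / a ^ 2) * (S ξ ξ * U ξ ξ) := by
    have := pair_sum ξ hξ ha f hf e he (S.flip ξ) (U.flip ξ)
    simpa using this
  rw [Finset.sum_congr rfl fun i _ => step1 i, Finset.sum_sub_distrib,
    ← Finset.mul_sum, ← Finset.mul_sum, hA,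
    Finset.sum_congr rfl fun k _ => step2 k, Finset.sum_sub_distrib,
    ← Finset.mul_sum, ← Finset.mul_sum, step3]
  field_simp
  ring

end Aux

/-- For a symmetric bilinear form `T` with `T(x,ξ) = −2n·η(x)` (the pointwise property of
the Ricci tensor of a Kenmotsu manifold), in any `ḡ`-orthonormal basis `f` and any
`g`-orthonormal basis `e`:
`⟨g,T⟩_ḡ = (1/a²)·tr_g T + 2n(a²−1)/a⁴`, `⟨T, η⊗η⟩_ḡ = −2n/a⁴`, and
`|T|²_ḡ = (1/a²)·|T|²_g − 4n²(a²−1)/a⁴`. -/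
theorem hilbertSchmidt_ricci_deformed
    (n : ℕ) (hn : 1 ≤ n) {V : Type*} [NormedAddCommGroup V] [InnerProductSpace ℝ V]
    [FiniteDimensional ℝ V] (hdim : Module.finrank ℝ V = 2 * n + 1)
    (ξ : V) (hξ : ‖ξ‖ = 1) (a : ℝ) (ha : 0 < a)
    (T : V →ₗ[ℝ] V →ₗ[ℝ] ℝ)
    (hTsymm : ∀ x y, T x y = T y x)
    (hTξ : ∀ x, T x ξ = -(2 * (n : ℝ)) * ⟪ξ, x⟫)
    (f : Module.Basis (Fin (2 * n + 1)) ℝ V)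
    (hf : ∀ i j, gbar ξ a (f i) (f j) = if i = j then 1 else 0)
    (e : Module.Basis (Fin (2 * n + 1)) ℝ V) (he : Orthonormal ℝ ⇑e) :
    (∑ i, ∑ j, (⟪f i, f j⟫ : ℝ) * T (f i) (f j) =
      (1 / a ^ 2) * (∑ i, T (e i) (e i)) + 2 * (n : ℝ) * (a ^ 2 - 1) / a ^ 4) ∧
    (∑ i, ∑ j, T (f i) (f j) * (⟪ξ, f i⟫ * ⟪ξ, f j⟫) = -(2 * (n : ℝ)) / a ^ 4) ∧
    (∑ i, ∑ j, (T (f i) (f j)) ^ 2 =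
      (1 / a ^ 2) * (∑ i, ∑ j, (T (e i) (e j)) ^ 2) -
        4 * (n : ℝ) ^ 2 * (a ^ 2 - 1) / a ^ 4) := by
  have ha' : a ≠ 0 := ne_of_gt ha
  have hξξ : (⟪ξ, ξ⟫ : ℝ) = 1 := by
    rw [real_inner_self_eq_norm_sq, hξ]; norm_num
  have hTξv : ∀ v : V, T ξ v = -(2 * (n : ℝ)) * ⟪ξ, v⟫ := by
    intro v; rw [hTsymm]; exact hTξ v
  have hTξξ : T ξ ξ = -(2 * (n : ℝ)) := by rw [hTξv, hξξ, mul_one]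
  -- the inner product as a bilinear map
  set gF : V →ₗ[ℝ] V →ₗ[ℝ] ℝ := LinearMap.mk₂ ℝ (fun x y => ⟪x, y⟫)
    (fun x x' y => by simp [inner_add_left])
    (fun c x y => by simp [real_inner_smul_left])
    (fun x y y' => by simp [inner_add_right])
    (fun c x y => by simp [real_inner_smul_right]) with hgF
  -- η ⊗ η as a bilinear map
  set EF : V →ₗ[ℝ] V →ₗ[ℝ] ℝ := LinearMap.mk₂ ℝ (fun x y => ⟪ξ, x⟫ * ⟪ξ, y⟫)
    (fun x x' y => by simp only [inner_add_right]; ring)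
    (fun c x y => by simp only [real_inner_smul_right, smul_eq_mul]; ring)
    (fun x y y' => by simp only [inner_add_right]; ring)
    (fun c x y => by simp only [real_inner_smul_right, smul_eq_mul]; ring) with hEF
  have hgFa : ∀ x y : V, gF x y = ⟪x, y⟫ := fun x y => rfl
  have hEFa : ∀ x y : V, EF x y = ⟪ξ, x⟫ * ⟪ξ, y⟫ := fun x y => rfl
  -- Parseval-type evaluations in the orthonormal basis e
  have hee : ∀ l k, (⟪e l, e k⟫ : ℝ) = if l = k then 1 else 0 := orthonormal_iff_ite.mp he
  have sum_xixi : ∑ k, (⟪ξ, e k⟫ : ℝ) * ⟪ξ, e k⟫ = 1 := by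
    have := expand_e e he (gF ξ) ξ
    rw [hgFa ξ ξ, hξξ] at this
    rw [← this]
    exact Finset.sum_congr rfl fun k _ => by
      rw [hgFa, real_inner_comm (e k) ξ]
  have sum_xiT : ∀ x : V, ∑ k, (⟪ξ, e k⟫ : ℝ) * T x (e k) = T x ξ := by
    intro x
    have := expand_e e he (T x) ξ
    rw [← this]
    exact Finset.sum_congr rfl fun k _ => by rw [real_inner_comm (e k) ξ]
  -- diagonal sums
  have diagT : ∑ k, ∑ l, (⟪e l, e k⟫ : ℝ) * T (e l) (e k) = ∑ k, T (e k) (e k) := by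
    refine Finset.sum_congr rfl fun k _ => ?_
    simp [hee, Finset.sum_ite_eq, Finset.sum_ite_eq', ite_mul]
  have doubleTE : ∑ k, ∑ l, T (e l) (e k) * (⟪ξ, e l⟫ * ⟪ξ, e k⟫) = -(2 * (n : ℝ)) := by
    have h1 : ∀ k, ∑ l, T (e l) (e k) * (⟪ξ, e l⟫ * ⟪ξ, e k⟫) =
        ⟪ξ, e k⟫ * (-(2 * (n : ℝ)) * ⟪ξ, e k⟫) := by
      intro k
      have h2 : ∑ l, (⟪ξ, e l⟫ : ℝ) * T (e k) (e l) = -(2 * (n : ℝ)) * ⟪ξ, e k⟫ := by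
        rw [sum_xiT (e k), hTξ]
      calc ∑ l, T (e l) (e k) * (⟪ξ, e l⟫ * ⟪ξ, e k⟫)
          = ⟪ξ, e k⟫ * ∑ l, (⟪ξ, e l⟫ : ℝ) * T (e k) (e l) := by
            rw [Finset.mul_sum]
            exact Finset.sum_congr rfl fun l _ => by rw [hTsymm (e l) (e k)]; ring
        _ = ⟪ξ, e k⟫ * (-(2 * (n : ℝ)) * ⟪ξ, e k⟫) := by rw [h2]
    rw [Finset.sum_congr rfl fun k _ => h1 k]
    have : ∑ k, (⟪ξ, e k⟫ : ℝ) * (-(2 * (n : ℝ)) * ⟪ξ, e k⟫) =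
        -(2 * (n : ℝ)) * ∑ k, (⟪ξ, e k⟫ : ℝ) * ⟪ξ, e k⟫ := by
      rw [Finset.mul_sum]
      exact Finset.sum_congr rfl fun k _ => by ring
    rw [this, sum_xixi, mul_one]
  have sumTxiTxi : ∑ k, T ξ (e k) * T ξ (e k) = 4 * (n : ℝ) ^ 2 := by
    have : ∀ k, T ξ (e k) * T ξ (e k) =
        (4 * (n : ℝ) ^ 2) * (⟪ξ, e k⟫ * ⟪ξ, e k⟫) := by
      intro k; rw [hTξv]; ring
    rw [Finset.sum_congr rfl fun k _ => this k, ← Finset.mul_sum, sum_xixi, mul_one]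
  -- Part 1
  have part1 : ∑ i, ∑ j, (⟪f i, f j⟫ : ℝ) * T (f i) (f j) =
      (1 / a ^ 2) * (∑ i, T (e i) (e i)) + 2 * (n : ℝ) * (a ^ 2 - 1) / a ^ 4 := by
    have h := double_sum ξ hξ ha' f hf e he gF T
    simp only [hgFa] at h
    rw [diagT] at h
    have hB : ∑ k, (⟪ξ, e k⟫ : ℝ) * T ξ (e k) = -(2 * (n : ℝ)) := by
      rw [sum_xiT ξ, hTξξ]
    have hC : ∑ l, (⟪e l, ξ⟫ : ℝ) * T (e l) ξ = -(2 * (n : ℝ)) := by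
      have : ∀ l, (⟪e l, ξ⟫ : ℝ) * T (e l) ξ =
          -(2 * (n : ℝ)) * (⟪ξ, e l⟫ * ⟪ξ, e l⟫) := by
        intro l; rw [hTξ, real_inner_comm (e l) ξ]; ring
      rw [Finset.sum_congr rfl fun l _ => this l, ← Finset.mul_sum, sum_xixi, mul_one]
    rw [hB, hC, hξξ, hTξξ] at h
    rw [h]
    field_simp
    ring
  -- Part 2
  have part2 : ∑ i, ∑ j, T (f i) (f j) * (⟪ξ, f i⟫ * ⟪ξ, f j⟫) = -(2 * (n : ℝ)) / a ^ 4 := by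
    have h := double_sum ξ hξ ha' f hf e he T EF
    simp only [hEFa] at h
    rw [doubleTE] at h
    have hB : ∑ k, T ξ (e k) * ((⟪ξ, ξ⟫ : ℝ) * ⟪ξ, e k⟫) = -(2 * (n : ℝ)) := by
      have : ∀ k, T ξ (e k) * ((⟪ξ, ξ⟫ : ℝ) * ⟪ξ, e k⟫) =
          -(2 * (n : ℝ)) * (⟪ξ, e k⟫ * ⟪ξ, e k⟫) := by
        intro k; rw [hTξv, hξξ]; ring
      rw [Finset.sum_congr rfl fun k _ => this k, ← Finset.mul_sum, sum_xixi, mul_one]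
    have hC : ∑ l, T (e l) ξ * ((⟪ξ, e l⟫ : ℝ) * ⟪ξ, ξ⟫) = -(2 * (n : ℝ)) := by
      have : ∀ l, T (e l) ξ * ((⟪ξ, e l⟫ : ℝ) * ⟪ξ, ξ⟫) =
          -(2 * (n : ℝ)) * (⟪ξ, e l⟫ * ⟪ξ, e l⟫) := by
        intro l; rw [hTξ, hξξ]; ring
      rw [Finset.sum_congr rfl fun l _ => this l, ← Finset.mul_sum, sum_xixi, mul_one]
    rw [hB, hC, hξξ, hTξξ] at h
    rw [h]
    field_simp
    ring
  -- Part 3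
  have part3 : ∑ i, ∑ j, (T (f i) (f j)) ^ 2 =
      (1 / a ^ 2) * (∑ i, ∑ j, (T (e i) (e j)) ^ 2) -
        4 * (n : ℝ) ^ 2 * (a ^ 2 - 1) / a ^ 4 := by
    have h := double_sum ξ hξ ha' f hf e he T T
    have hC : ∑ l, T (e l) ξ * T (e l) ξ = 4 * (n : ℝ) ^ 2 := by
      have : ∀ l, T (e l) ξ * T (e l) ξ =
          (4 * (n : ℝ) ^ 2) * (⟪ξ, e l⟫ * ⟪ξ, e l⟫) := by
        intro l; rw [hTξ]; ring
      rw [Finset.sum_congr rfl fun l _ => this l, ← Finset.mul_sum, sum_xixi, mul_one]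
    rw [sumTxiTxi, hC, hTξξ] at h
    simp only [← sq] at h
    have hcomm : ∑ k, ∑ l, (T (e l)) (e k) ^ 2 = ∑ i, ∑ j, (T (e i)) (e j) ^ 2 :=
      Finset.sum_comm
    rw [hcomm] at h
    rw [h]
    field_simp
    ring
  exact ⟨part1, part2, part3⟩
end

section
/- Let H be a symmetric bilinear form on V admitting ξ as an eigenvector (the pointwise property of the Hessian of a function whose gradient's covariant derivative leaves ξ-directions proportional to η). Then: ⟨g, H⟩_ḡ = (1/a²)·tr_g H − ((a²−1)/a⁴)·H(ξ,ξ), ⟨H, η⊗η⟩_ḡ = (1/a⁴)·H(ξ,ξ), and |H|²_ḡ = (1/a²)·|H|²_g − ((a²−1)/a⁴)·(H(ξ,ξ))². -/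
open scoped RealInnerProductSpace BigOperators

/-- For a symmetric bilinear form `H` admitting `ξ` as an eigenvector (the pointwise
property of a Hessian), in any `ḡ`-orthonormal basis `f` and any `g`-orthonormal basis `e`:
`⟨g,H⟩_ḡ = (1/a²)·tr_g H − ((a²−1)/a⁴)·H(ξ,ξ)`, `⟨H, η⊗η⟩_ḡ = (1/a⁴)·H(ξ,ξ)`, and
`|H|²_ḡ = (1/a²)·|H|²_g − ((a²−1)/a⁴)·(H(ξ,ξ))²`. -/
theorem hilbertSchmidt_hessian_deformed
    (n : ℕ) (hn : 1 ≤ n) {V : Type*} [NormedAddCommGroup V] [InnerProductSpace ℝ V]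
    [FiniteDimensional ℝ V] (hdim : Module.finrank ℝ V = 2 * n + 1)
    (ξ : V) (hξ : ‖ξ‖ = 1) (a : ℝ) (ha : 0 < a)
    (H : V →ₗ[ℝ] V →ₗ[ℝ] ℝ)
    (hHsymm : ∀ x y, H x y = H y x)
    (hHξ : ∀ x, H x ξ = H ξ ξ * ⟪x, ξ⟫)
    (f : Module.Basis (Fin (2 * n + 1)) ℝ V)
    (hf : ∀ i j, gbar ξ a (f i) (f j) = if i = j then 1 else 0)
    (e : Module.Basis (Fin (2 * n + 1)) ℝ V) (he : Orthonormal ℝ ⇑e) :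
    (∑ i, ∑ j, (⟪f i, f j⟫ : ℝ) * H (f i) (f j) =
      (1 / a ^ 2) * (∑ i, H (e i) (e i)) - ((a ^ 2 - 1) / a ^ 4) * H ξ ξ) ∧
    (∑ i, ∑ j, H (f i) (f j) * (⟪ξ, f i⟫ * ⟪ξ, f j⟫) = (1 / a ^ 4) * H ξ ξ) ∧
    (∑ i, ∑ j, (H (f i) (f j)) ^ 2 =
      (1 / a ^ 2) * (∑ i, ∑ j, (H (e i) (e j)) ^ 2) -
        ((a ^ 2 - 1) / a ^ 4) * (H ξ ξ) ^ 2) := by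
  have ha0 : a ≠ 0 := ne_of_gt ha
  have hξξ : (⟪ξ, ξ⟫ : ℝ) = 1 := by
    rw [real_inner_self_eq_norm_sq, hξ]; norm_num
  -- Riesz representative of H
  set S : V → V :=
    fun x => (InnerProductSpace.toDual ℝ V).symm (LinearMap.toContinuousLinearMap (H x))
    with hSdef
  have hS : ∀ x y, (⟪S x, y⟫ : ℝ) = H x y := by
    intro x y
    simp only [hSdef, InnerProductSpace.toDual_symm_apply]
    simp
  have hS' : ∀ x y, (⟪x, S y⟫ : ℝ) = H y x := by
    intro x y; rw [real_inner_comm]; exact hS y x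
  have hSadj : ∀ x y, (⟪S x, y⟫ : ℝ) = ⟪x, S y⟫ := by
    intro x y; rw [hS, hS', hHsymm]
  -- repr formula for the ḡ-orthonormal basis f
  have hrepr : ∀ (v : V) (j : Fin (2 * n + 1)),
      (f.repr v) j = a * ⟪f j, v⟫ + a * (a - 1) * (⟪ξ, f j⟫ * ⟪ξ, v⟫) := by
    intro v j
    have h1 : (⟪f j, v⟫ : ℝ) = ∑ i, f.repr v i * ⟪f j, f i⟫ := by
      conv_lhs => rw [← f.sum_repr v]
      rw [inner_sum]; simp_rw [real_inner_smul_right]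
    have h2 : (⟪ξ, v⟫ : ℝ) = ∑ i, f.repr v i * ⟪ξ, f i⟫ := by
      conv_lhs => rw [← f.sum_repr v]
      rw [inner_sum]; simp_rw [real_inner_smul_right]
    have h3 : ∀ i, a * (f.repr v i * ⟪f j, f i⟫)
        + a * (a - 1) * (⟪ξ, f j⟫ * (f.repr v i * ⟪ξ, f i⟫))
        = f.repr v i * (if j = i then 1 else 0) := by
      intro i
      rw [← hf j i]; simp only [gbar]; ring
    symm
    calc a * ⟪f j, v⟫ + a * (a - 1) * (⟪ξ, f j⟫ * ⟪ξ, v⟫)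
        = ∑ i, (a * (f.repr v i * ⟪f j, f i⟫)
            + a * (a - 1) * (⟪ξ, f j⟫ * (f.repr v i * ⟪ξ, f i⟫))) := by
          rw [h1, h2]
          simp only [Finset.mul_sum]
          rw [← Finset.sum_add_distrib]
      _ = ∑ i, f.repr v i * (if j = i then 1 else 0) :=
          Finset.sum_congr rfl fun i _ => h3 i
      _ = f.repr v j := by simp
  -- completeness relation for f
  have factF : ∀ u v : V, ∑ i, (⟪u, f i⟫ : ℝ) * ⟪f i, v⟫
      = (1 / a) * ⟪u, v⟫ + ((1 - a) / a ^ 2) * (⟪ξ, u⟫ * ⟪ξ, v⟫) := by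
    intro u v
    set w : V := (1 / a) • u + (((1 - a) / a ^ 2) * ⟪ξ, u⟫) • ξ with hw
    have hcoef : ∀ i, (⟪u, f i⟫ : ℝ) = f.repr w i := by
      intro i
      rw [hrepr w i, hw]
      simp only [inner_add_right, real_inner_smul_right, hξξ, mul_one]
      rw [real_inner_comm u (f i), real_inner_comm ξ (f i)]
      field_simp
      ring
    calc ∑ i, (⟪u, f i⟫ : ℝ) * ⟪f i, v⟫
        = ∑ i, f.repr w i * ⟪f i, v⟫ :=
          Finset.sum_congr rfl fun i _ => by rw [hcoef i]
      _ = ⟪w, v⟫ := by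
          conv_rhs => rw [← f.sum_repr w]
          rw [sum_inner]; simp_rw [real_inner_smul_left]
      _ = (1 / a) * ⟪u, v⟫ + ((1 - a) / a ^ 2) * (⟪ξ, u⟫ * ⟪ξ, v⟫) := by
          rw [hw]
          simp only [inner_add_left, real_inner_smul_left]
          ring
  -- Parseval for e
  have factE : ∀ u v : V, ∑ i, (⟪u, e i⟫ : ℝ) * ⟪e i, v⟫ = ⟪u, v⟫ := by
    intro u v
    have := (e.toOrthonormalBasis he).sum_inner_mul_inner u v
    simpa [Module.Basis.coe_toOrthonormalBasis] using this
  have sum_ξf : ∑ i, (⟪ξ, f i⟫ : ℝ) * ⟪f i, ξ⟫ = 1 / a + (1 - a) / a ^ 2 := by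
    rw [factF ξ ξ, hξξ]; ring
  -- trace transition lemma
  have TT : ∀ w : V → V, (∀ x y, (⟪w x, y⟫ : ℝ) = ⟪x, w y⟫) →
      ∑ i, (⟪f i, w (f i)⟫ : ℝ)
        = (1 / a) * ∑ k, (⟪e k, w (e k)⟫ : ℝ) + ((1 - a) / a ^ 2) * ⟪ξ, w ξ⟫ := by
    intro w hw
    have step1 : ∀ i, (⟪f i, w (f i)⟫ : ℝ) = ∑ k, (⟪w (e k), f i⟫ : ℝ) * ⟪f i, e k⟫ := by
      intro i
      rw [← factE (f i) (w (f i))]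
      refine Finset.sum_congr rfl fun k _ => ?_
      rw [← hw (e k) (f i)]; ring
    calc ∑ i, (⟪f i, w (f i)⟫ : ℝ)
        = ∑ i, ∑ k, (⟪w (e k), f i⟫ : ℝ) * ⟪f i, e k⟫ :=
          Finset.sum_congr rfl fun i _ => step1 i
      _ = ∑ k, ∑ i, (⟪w (e k), f i⟫ : ℝ) * ⟪f i, e k⟫ := Finset.sum_comm
      _ = ∑ k, ((1 / a) * ⟪w (e k), e k⟫
            + ((1 - a) / a ^ 2) * (⟪ξ, w (e k)⟫ * ⟪ξ, e k⟫)) :=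
          Finset.sum_congr rfl fun k _ => factF _ _
      _ = (1 / a) * ∑ k, (⟪e k, w (e k)⟫ : ℝ) + ((1 - a) / a ^ 2) * ⟪ξ, w ξ⟫ := by
          rw [Finset.sum_add_distrib, ← Finset.mul_sum, ← Finset.mul_sum]
          congr 1
          · congr 1
            exact Finset.sum_congr rfl fun k _ => real_inner_comm _ _
          · congr 1
            calc ∑ k, (⟪ξ, w (e k)⟫ : ℝ) * ⟪ξ, e k⟫
                = ∑ k, (⟪w ξ, e k⟫ : ℝ) * ⟪e k, ξ⟫ := by
                  refine Finset.sum_congr rfl fun k _ => ?_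
                  rw [← hw ξ (e k), real_inner_comm ξ (e k)]
              _ = ⟪w ξ, ξ⟫ := factE _ _
              _ = ⟪ξ, w ξ⟫ := real_inner_comm _ _
  -- Part 1
  have p1 : ∑ i, ∑ j, (⟪f i, f j⟫ : ℝ) * H (f i) (f j) =
      (1 / a ^ 2) * (∑ i, H (e i) (e i)) - ((a ^ 2 - 1) / a ^ 4) * H ξ ξ := by
    have inner_j : ∀ i, ∑ j, (⟪f i, f j⟫ : ℝ) * H (f i) (f j)
        = (1 / a) * ⟪f i, S (f i)⟫
          + ((1 - a) / a ^ 2 * H ξ ξ) * (⟪ξ, f i⟫ * ⟪f i, ξ⟫) := by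
      intro i
      have h1 : ∀ j, (⟪f i, f j⟫ : ℝ) * H (f i) (f j)
          = ⟪f i, f j⟫ * ⟪f j, S (f i)⟫ := by
        intro j; rw [hS' (f j) (f i)]
      rw [Finset.sum_congr rfl fun j _ => h1 j, factF (f i) (S (f i))]
      have h2 : (⟪ξ, S (f i)⟫ : ℝ) = H ξ ξ * ⟪f i, ξ⟫ := by
        rw [hS' ξ (f i)]; exact hHξ (f i)
      rw [h2]; ring
    have hTf : ∑ i, (⟪f i, S (f i)⟫ : ℝ)
        = (1 / a) * (∑ k, H (e k) (e k)) + ((1 - a) / a ^ 2) * H ξ ξ := by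
      rw [TT S hSadj]
      congr 1
      · congr 1
        exact Finset.sum_congr rfl fun k _ => hS' (e k) (e k)
      · congr 1
        exact hS' ξ ξ
    calc ∑ i, ∑ j, (⟪f i, f j⟫ : ℝ) * H (f i) (f j)
        = ∑ i, ((1 / a) * ⟪f i, S (f i)⟫
            + ((1 - a) / a ^ 2 * H ξ ξ) * (⟪ξ, f i⟫ * ⟪f i, ξ⟫)) :=
          Finset.sum_congr rfl fun i _ => inner_j i
      _ = (1 / a) * ∑ i, (⟪f i, S (f i)⟫ : ℝ)
          + ((1 - a) / a ^ 2 * H ξ ξ) * ∑ i, (⟪ξ, f i⟫ : ℝ) * ⟪f i, ξ⟫ := by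
          rw [Finset.sum_add_distrib, ← Finset.mul_sum, ← Finset.mul_sum]
      _ = (1 / a ^ 2) * (∑ i, H (e i) (e i)) - ((a ^ 2 - 1) / a ^ 4) * H ξ ξ := by
          rw [hTf, sum_ξf]
          field_simp
          ring
  -- Part 2
  have p2 : ∑ i, ∑ j, H (f i) (f j) * (⟪ξ, f i⟫ * ⟪ξ, f j⟫) = (1 / a ^ 4) * H ξ ξ := by
    have inner_j : ∀ i, ∑ j, H (f i) (f j) * (⟪ξ, f i⟫ * ⟪ξ, f j⟫)
        = ((1 / a ^ 2) * H ξ ξ) * (⟪ξ, f i⟫ * ⟪f i, ξ⟫) := by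
      intro i
      have h1 : ∀ j, H (f i) (f j) * (⟪ξ, f i⟫ * ⟪ξ, f j⟫)
          = ⟪ξ, f i⟫ * ((⟪ξ, f j⟫ : ℝ) * ⟪f j, S (f i)⟫) := by
        intro j; rw [← hS' (f j) (f i)]; ring
      rw [Finset.sum_congr rfl fun j _ => h1 j, ← Finset.mul_sum, factF ξ (S (f i)),
        hξξ, hS' ξ (f i), hHξ (f i)]
      field_simp
      ring
    rw [Finset.sum_congr rfl fun i _ => inner_j i, ← Finset.mul_sum, sum_ξf]
    field_simp
    ring
  -- Part 3
  have p3 : ∑ i, ∑ j, (H (f i) (f j)) ^ 2 =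
      (1 / a ^ 2) * (∑ i, ∑ j, (H (e i) (e j)) ^ 2) -
        ((a ^ 2 - 1) / a ^ 4) * (H ξ ξ) ^ 2 := by
    have inner_j : ∀ i, ∑ j, (H (f i) (f j)) ^ 2
        = (1 / a) * ⟪f i, S (S (f i))⟫
          + ((1 - a) / a ^ 2 * (H ξ ξ) ^ 2) * (⟪ξ, f i⟫ * ⟪f i, ξ⟫) := by
      intro i
      have h1 : ∀ j, (H (f i) (f j)) ^ 2 = (⟪S (f i), f j⟫ : ℝ) * ⟪f j, S (f i)⟫ := by
        intro j; rw [hS (f i) (f j), hS' (f j) (f i)]; ring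
      rw [Finset.sum_congr rfl fun j _ => h1 j, factF (S (f i)) (S (f i)),
        hSadj (f i) (S (f i)), hS' ξ (f i), hHξ (f i), real_inner_comm ξ (f i)]
      ring
    have hadj2 : ∀ x y, (⟪S (S x), y⟫ : ℝ) = ⟪x, S (S y)⟫ := by
      intro x y
      rw [hSadj (S x) y, ← hSadj x (S y)]
    have hT3 : ∑ i, (⟪f i, S (S (f i))⟫ : ℝ)
        = (1 / a) * (∑ k, ∑ l, (H (e k) (e l)) ^ 2)
          + ((1 - a) / a ^ 2) * (H ξ ξ) ^ 2 := by
      rw [TT (fun x => S (S x)) hadj2]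
      congr 1
      · congr 1
        refine Finset.sum_congr rfl fun k _ => ?_
        calc (⟪e k, S (S (e k))⟫ : ℝ)
            = ⟪S (S (e k)), e k⟫ := real_inner_comm _ _
          _ = ⟪S (e k), S (e k)⟫ := hSadj (S (e k)) (e k)
          _ = ∑ l, (⟪S (e k), e l⟫ : ℝ) * ⟪e l, S (e k)⟫ := (factE _ _).symm
          _ = ∑ l, (H (e k) (e l)) ^ 2 :=
              Finset.sum_congr rfl fun l _ => by
                rw [hS (e k) (e l), hS' (e l) (e k)]; ring
      · congr 1
        calc (⟪ξ, S (S ξ)⟫ : ℝ)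
            = ⟪S (S ξ), ξ⟫ := real_inner_comm _ _
          _ = ⟪S ξ, S ξ⟫ := hSadj (S ξ) ξ
          _ = H ξ (S ξ) := hS ξ (S ξ)
          _ = H (S ξ) ξ := hHsymm _ _
          _ = H ξ ξ * ⟪S ξ, ξ⟫ := hHξ (S ξ)
          _ = H ξ ξ * H ξ ξ := by rw [hS ξ ξ]
          _ = (H ξ ξ) ^ 2 := (sq _).symm
    calc ∑ i, ∑ j, (H (f i) (f j)) ^ 2
        = ∑ i, ((1 / a) * ⟪f i, S (S (f i))⟫
            + ((1 - a) / a ^ 2 * (H ξ ξ) ^ 2) * (⟪ξ, f i⟫ * ⟪f i, ξ⟫)) :=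
          Finset.sum_congr rfl fun i _ => inner_j i
      _ = (1 / a) * ∑ i, (⟪f i, S (S (f i))⟫ : ℝ)
          + ((1 - a) / a ^ 2 * (H ξ ξ) ^ 2) * ∑ i, (⟪ξ, f i⟫ : ℝ) * ⟪f i, ξ⟫ := by
          rw [Finset.sum_add_distrib, ← Finset.mul_sum, ← Finset.mul_sum]
      _ = (1 / a ^ 2) * (∑ i, ∑ j, (H (e i) (e j)) ^ 2) -
            ((a ^ 2 - 1) / a ^ 4) * (H ξ ξ) ^ 2 := by
          rw [hT3, sum_ξf]
          field_simp
          ring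
  exact ⟨p1, p2, p3⟩
end

section
/- Let T be a symmetric bilinear form on V satisfying T(x, ξ) = −2n·η(x) for all x ∈ V. Then for every real a > 0 the Hilbert–Schmidt norm of T with respect to g satisfies |T|²_g ≥ 4n²(a²−1)/a². In particular, if |T|²_g < 4n², then a < 4n²/(4n² − |T|²_g). -/
open scoped RealInnerProductSpace BigOperators

/-- If a symmetric bilinear form `T` on `V` satisfies `T(x,ξ) = −2n·η(x)` for all `x`
(the pointwise property of the Ricci tensor of a Kenmotsu manifold), then for every
`a > 0` its Hilbert–Schmidt norm w.r.t. `g` satisfies `|T|²_g ≥ 4n²(a²−1)/a²`; in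
particular, if `|T|²_g < 4n²`, then `a < 4n²/(4n² − |T|²_g)`. -/
theorem ricci_norm_lower_bound
    (n : ℕ) (hn : 1 ≤ n) {V : Type*} [NormedAddCommGroup V] [InnerProductSpace ℝ V]
    [FiniteDimensional ℝ V] (hdim : Module.finrank ℝ V = 2 * n + 1)
    (ξ : V) (hξ : ‖ξ‖ = 1)
    (T : V →ₗ[ℝ] V →ₗ[ℝ] ℝ)
    (hTsymm : ∀ x y, T x y = T y x)
    (hTξ : ∀ x, T x ξ = -(2 * (n : ℝ)) * ⟪ξ, x⟫)
    (e : Module.Basis (Fin (2 * n + 1)) ℝ V) (he : Orthonormal ℝ ⇑e)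
    (N : ℝ) (hN : N = ∑ i, ∑ j, (T (e i) (e j)) ^ 2) :
    ∀ a : ℝ, 0 < a →
      4 * (n : ℝ) ^ 2 * (a ^ 2 - 1) / a ^ 2 ≤ N ∧
      (N < 4 * (n : ℝ) ^ 2 → a < 4 * (n : ℝ) ^ 2 / (4 * (n : ℝ) ^ 2 - N)) := by
  intro a ha
  set b : OrthonormalBasis (Fin (2 * n + 1)) ℝ V := e.toOrthonormalBasis he with hbdef
  have hbe : ∀ i, b i = e i := fun i => by simp [hbdef]
  have hrep : ∑ j, ⟪e j, ξ⟫ • e j = ξ := by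
    have := b.sum_repr' ξ
    simpa [hbe] using this
  have hpar : ∑ j, ⟪ξ, e j⟫ ^ 2 = 1 := by
    have h1 : ⟪∑ j, ⟪e j, ξ⟫ • e j, ξ⟫ = ⟪ξ, ξ⟫ := by rw [hrep]
    have h2 : ⟪(ξ : V), ξ⟫ = 1 := by
      rw [real_inner_self_eq_norm_sq, hξ]; norm_num
    rw [h2] at h1
    rw [← h1, sum_inner]
    refine Finset.sum_congr rfl fun j _ => ?_
    rw [real_inner_smul_left, real_inner_comm ξ (e j)]
    ring
  have hexp : ∀ i, T (e i) ξ = ∑ j, ⟪ξ, e j⟫ * T (e i) (e j) := by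
    intro i
    conv_lhs => rw [← hrep]
    rw [map_sum]
    refine Finset.sum_congr rfl fun j _ => ?_
    rw [map_smul, real_inner_comm ξ (e j)]
    rfl
  have hstep : ∀ i, 4 * (n : ℝ) ^ 2 * ⟪ξ, e i⟫ ^ 2 ≤ ∑ j, T (e i) (e j) ^ 2 := by
    intro i
    have h1 : (∑ j, ⟪ξ, e j⟫ * T (e i) (e j)) ^ 2 ≤
        (∑ j, ⟪ξ, e j⟫ ^ 2) * ∑ j, T (e i) (e j) ^ 2 :=
      Finset.sum_mul_sq_le_sq_mul_sq _ _ _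
    rw [hpar, one_mul, ← hexp i, hTξ (e i)] at h1
    calc 4 * (n : ℝ) ^ 2 * ⟪ξ, e i⟫ ^ 2 = (-(2 * (n : ℝ)) * ⟪ξ, e i⟫) ^ 2 := by ring
      _ ≤ _ := h1
  have hkey : 4 * (n : ℝ) ^ 2 ≤ N := by
    calc 4 * (n : ℝ) ^ 2 = 4 * (n : ℝ) ^ 2 * ∑ i, ⟪ξ, e i⟫ ^ 2 := by rw [hpar]; ring
      _ = ∑ i, 4 * (n : ℝ) ^ 2 * ⟪ξ, e i⟫ ^ 2 := by rw [Finset.mul_sum]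
      _ ≤ ∑ i, ∑ j, T (e i) (e j) ^ 2 := Finset.sum_le_sum fun i _ => hstep i
      _ = N := hN.symm
  constructor
  · have ha2 : (0 : ℝ) < a ^ 2 := by positivity
    rw [div_le_iff₀ ha2]
    nlinarith [sq_nonneg (n : ℝ)]
  · intro h
    linarith
end

section
/- Let L be a symmetric bilinear form on V, λ ∈ ℝ, and let R : V × V × V × V → ℝ be a multilinear map such that for all x, y, z, w ∈ V: 2·R(x,y,z,w) + [g(x,w)L(y,z) + g(y,z)L(x,w) − g(x,z)L(y,w) − g(y,w)L(x,z)] = 2λ·[g(x,w)g(y,z) − g(x,z)g(y,w)]. Define Ric_R(y,z) := Σᵢ R(eᵢ, y, z, eᵢ) over a g-orthonormal basis (eᵢ) of V. Then (1/2)·L(y,z) + (1/(2n−1))·Ric_R(y,z) = ((2nλ − (1/2)·tr_g L)/(2n−1))·g(y,z) for all y, z ∈ V, and Σᵢ Ric_R(eᵢ,eᵢ) = 2n·[(2n+1)λ − tr_g L]. (This is the pointwise contraction of the Riemann soliton equation, with L = £_V g, tr_g L = 2 div(V), and Σᵢ Ric_R(eᵢ,eᵢ) the scalar curvature.) -/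
open scoped RealInnerProductSpace BigOperators

/-- Pointwise contraction of the Riemann soliton equation: if
`2R(x,y,z,w) + (g ⊙ L)(…) = 2λ(g ⊙ g)(…)/…` holds for all vectors, then
`(1/2)L + (1/(2n−1))·Ric_R = ((2nλ − (1/2)tr_g L)/(2n−1))·g` and the total trace of
`Ric_R` equals `2n[(2n+1)λ − tr_g L]`. -/
theorem riemann_soliton_contraction
    (n : ℕ) (hn : 1 ≤ n) {V : Type*} [NormedAddCommGroup V] [InnerProductSpace ℝ V]
    [FiniteDimensional ℝ V] (hdim : Module.finrank ℝ V = 2 * n + 1)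
    (L : V →ₗ[ℝ] V →ₗ[ℝ] ℝ) (hLsymm : ∀ x y, L x y = L y x) (lam : ℝ)
    (R : V →ₗ[ℝ] V →ₗ[ℝ] V →ₗ[ℝ] V →ₗ[ℝ] ℝ)
    (hsol : ∀ x y z w : V,
      2 * R x y z w +
        (⟪x, w⟫ * L y z + ⟪y, z⟫ * L x w - ⟪x, z⟫ * L y w - ⟪y, w⟫ * L x z) =
      2 * lam * (⟪x, w⟫ * ⟪y, z⟫ - ⟪x, z⟫ * ⟪y, w⟫))
    (e : Module.Basis (Fin (2 * n + 1)) ℝ V) (he : Orthonormal ℝ ⇑e) :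
    (∀ y z : V, (1 / 2) * L y z + (1 / (2 * (n : ℝ) - 1)) * (∑ i, R (e i) y z (e i)) =
      ((2 * (n : ℝ) * lam - (1 / 2) * ∑ i, L (e i) (e i)) / (2 * (n : ℝ) - 1)) *
        ⟪y, z⟫) ∧
    (∑ j, ∑ i, R (e i) (e j) (e j) (e i) =
      2 * (n : ℝ) * ((2 * (n : ℝ) + 1) * lam - ∑ i, L (e i) (e i))) := by
  have hn1 : (1 : ℝ) ≤ (n : ℝ) := by exact_mod_cast hn
  have hne : (2 * (n : ℝ) - 1) ≠ 0 := by nlinarith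
  have hee : ∀ i, ⟪e i, e i⟫ = 1 := fun i => by
    simpa using (orthonormal_iff_ite.mp he i i)
  have hexp : ∀ z : V, ∑ i, ⟪e i, z⟫ • e i = z := by
    intro z
    have := (e.toOrthonormalBasis he).sum_repr' z
    simpa [Module.Basis.coe_toOrthonormalBasis] using this
  have hfun : ∀ (f : V →ₗ[ℝ] ℝ) (z : V), ∑ i, ⟪e i, z⟫ * f (e i) = f z := by
    intro f z
    conv_rhs => rw [← hexp z]
    rw [map_sum]
    simp [smul_eq_mul]
  have hinner : ∀ y z : V, ∑ i, ⟪e i, z⟫ * ⟪y, e i⟫ = ⟪y, z⟫ := by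
    intro y z
    conv_rhs => rw [← hexp z]
    rw [inner_sum]
    simp [real_inner_smul_right, mul_comm]
  set T : ℝ := ∑ i, L (e i) (e i) with hT
  have key : ∀ y z : V,
      2 * (∑ i, R (e i) y z (e i)) + (2 * (n : ℝ) - 1) * L y z =
        (4 * (n : ℝ) * lam - T) * ⟪y, z⟫ := by
    intro y z
    have H := Finset.sum_congr rfl (fun i (_ : i ∈ Finset.univ) => hsol (e i) y z (e i))
    have h1 : ∑ i, ⟪e i, z⟫ * L y (e i) = L y z := hfun (L y) z
    have h2 : ∑ i, ⟪y, e i⟫ * L (e i) z = L y z := by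
      have : ∀ i : Fin (2 * n + 1), ⟪y, e i⟫ * L (e i) z = ⟪e i, y⟫ * L z (e i) := by
        intro i; rw [real_inner_comm, hLsymm]
      rw [Finset.sum_congr rfl (fun i _ => this i), hfun (L z) y, hLsymm]
    have h3 : ∑ i, ⟪e i, z⟫ * ⟪y, e i⟫ = ⟪y, z⟫ := hinner y z
    have hcard : (Finset.univ : Finset (Fin (2 * n + 1))).card = 2 * n + 1 := by simp
    simp only [Finset.sum_add_distrib, Finset.sum_sub_distrib, ← Finset.mul_sum,
      ← Finset.sum_mul, hee, one_mul, h1, h2, h3, Finset.sum_const, hcard,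
      nsmul_eq_mul] at H
    push_cast at H
    linarith [H]
  refine ⟨fun y z => ?_, ?_⟩
  · have := key y z
    field_simp
    linarith [this]
  · have H := Finset.sum_congr rfl
      (fun j (_ : j ∈ (Finset.univ : Finset (Fin (2 * n + 1)))) => key (e j) (e j))
    simp only [Finset.sum_add_distrib, ← Finset.mul_sum, hee, Finset.sum_const,
      Finset.card_univ, Fintype.card_fin, nsmul_eq_mul] at H
    push_cast at H
    linarith [H]
end
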